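/- Let X be a complex topological vector space, T a continuous linear operator on X, and x ∈ X. Then for every nonzero complex number μ, the interior of the closure of {λ T^n x : λ ∈ 𝕋, n ≥ 0} equals the interior of the closure of {λ T^n (μ x) : λ ∈ 𝕋, n ≥ 0}. -/

import Mathlib

/-!
Write `O` for the circle orbit of `x` and `U` for the interior of its closure. The second set of
the statement is `μ • O`, so it suffices that `c • U ⊆ U` for all `c ≠ 0`; since every such `c`
is a power of scalars arbitrarily close to `1`, it suffices for `c` near `1`.

Unless `{0}` is dense (then `U` is everything), the closure of each circle `𝕋 • y` is nowhere
dense, so `U` lies in the closure of every tail `{λ T^m x : m ≥ n}`. Choose `T^n x ∈ U`; for `c`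
near `1` still `c • T^n x ∈ U ⊆ closure O`, and applying powers of `T` and rotations,
`c` times the `n`-th tail lies in `closure O`. Hence `c • U ⊆ closure O`, and `c • U` is open.
-/

open Filter Topology Set Metric
open scoped Pointwise

theorem smul_subset_of_eventually_nhds_one {α : Type*} [MulAction ℂ α] {s : Set α}
    (h : ∀ᶠ c in 𝓝 (1 : ℂ), c • s ⊆ s) {c : ℂ} (hc : c ≠ 0) : c • s ⊆ s := by
  -- `c` is the `k`-th power of `exp (log c / k)`, which tends to `1`
  have hroot : Tendsto (fun k : ℕ => Complex.exp (Complex.log c / k)) atTop (𝓝 1) := by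
    simpa [Function.comp_def] using (Complex.continuous_exp.tendsto 0).comp
      (tendsto_const_div_atTop_nhds_zero_nat (Complex.log c))
  obtain ⟨k, hk, hk0⟩ := ((hroot.eventually h).and (eventually_ne_atTop 0)).exists
  have hpow : ∀ n : ℕ, Complex.exp (Complex.log c / k) ^ n • s ⊆ s := by
    intro n
    induction n with
    | zero => simp
    | succ n ih => rw [pow_succ, mul_smul]; exact (smul_set_mono hk).trans ih
  simpa [← Complex.exp_nat_mul, mul_div_cancel₀, hk0, Complex.exp_log hc] using hpow k

theorem closure_eq_univ_of_closure_zero_eq_univ {G : Type*} [AddGroup G] [TopologicalSpace G]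
    [IsTopologicalAddGroup G] (h0 : closure ({0} : Set G) = univ) {s : Set G} (hs : s.Nonempty) :
    closure s = univ := by
  obtain ⟨a, ha⟩ := hs
  refine eq_univ_of_univ_subset ?_
  rw [← add_univ (singleton_nonempty a), ← h0, isCompact_singleton.add_closure_zero_eq_closure]
  exact closure_mono (singleton_subset_iff.2 ha)

section

variable {X : Type*} [AddCommGroup X] [Module ℂ X] [TopologicalSpace X] (T : X →L[ℂ] X)

def circleOrbit (x : X) : Set X := {z | ∃ l : ℂ, ‖l‖ = 1 ∧ ∃ n : ℕ, z = l • (T ^ n) x}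

theorem circleOrbit_smul (c : ℂ) (x : X) : circleOrbit T (c • x) = c • circleOrbit T x := by
  ext z
  constructor
  · rintro ⟨l, hl, n, rfl⟩
    exact ⟨l • (T ^ n) x, ⟨l, hl, n, rfl⟩, by rw [map_smul, smul_comm]⟩
  · rintro ⟨_, ⟨l, hl, n, rfl⟩, rfl⟩
    exact ⟨l, hl, n, by rw [map_smul, smul_comm]⟩

theorem circleOrbit_eq_union (x : X) :
    circleOrbit T x = (· • x) '' sphere (0 : ℂ) 1 ∪ circleOrbit T (T x) := by
  ext z
  constructor
  · rintro ⟨l, hl, _ | n, rfl⟩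
    · exact Or.inl ⟨l, by simpa using hl, by simp⟩
    · exact Or.inr ⟨l, hl, n, by rw [pow_succ]; rfl⟩
  · rintro (⟨l, hl, rfl⟩ | ⟨l, hl, n, rfl⟩)
    · exact ⟨l, by simpa using hl, 0, by simp⟩
    · exact ⟨l, hl, n + 1, by rw [pow_succ]; rfl⟩

theorem mapsTo_pow_closure_circleOrbit (k : ℕ) (x : X) :
    MapsTo (T ^ k) (closure (circleOrbit T x)) (closure (circleOrbit T x)) := by
  refine MapsTo.closure ?_ (T ^ k).continuous
  rintro _ ⟨l, hl, n, rfl⟩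
  exact ⟨l, hl, k + n, by rw [map_smul, pow_add]; rfl⟩

variable [ContinuousConstSMul ℂ X]

theorem smul_closure_circleOrbit_subset {l : ℂ} (hl : ‖l‖ = 1) (x : X) :
    l • closure (circleOrbit T x) ⊆ closure (circleOrbit T x) := by
  refine (smul_closure_subset l _).trans (closure_mono ?_)
  rintro _ ⟨_, ⟨l', hl', n, rfl⟩, rfl⟩
  exact ⟨l * l', by rw [norm_mul, hl, hl', one_mul], n, (mul_smul l l' _).symm⟩

theorem circleOrbit_subset_closure {x y : X} (hy : y ∈ closure (circleOrbit T x)) :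
    circleOrbit T y ⊆ closure (circleOrbit T x) := by
  rintro _ ⟨l, hl, k, rfl⟩
  exact smul_closure_circleOrbit_subset T hl x
    (smul_mem_smul_set (mapsTo_pow_closure_circleOrbit T k x hy))

theorem exists_pow_apply_mem_interior_closure_circleOrbit {x : X}
    (hU : (interior (closure (circleOrbit T x))).Nonempty) :
    ∃ n : ℕ, (T ^ n) x ∈ interior (closure (circleOrbit T x)) := by
  obtain ⟨u, hu⟩ := hU
  obtain ⟨_, hlU, l, hl, n, rfl⟩ := mem_closure_iff.1 (interior_subset hu) _ isOpen_interior hu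
  have hl0 : l ≠ 0 := norm_ne_zero_iff.1 (hl ▸ one_ne_zero)
  have hrot : l⁻¹ • interior (closure (circleOrbit T x)) ⊆ interior (closure (circleOrbit T x)) :=
    interior_maximal ((smul_set_mono interior_subset).trans
        (smul_closure_circleOrbit_subset T (by rw [norm_inv, hl, inv_one]) x))
      (isOpen_interior.smul₀ (inv_ne_zero hl0))
  exact ⟨n, by simpa [smul_smul, hl0] using hrot (smul_mem_smul_set (a := l⁻¹) hlU)⟩

end

section

variable {X : Type*} [AddCommGroup X] [Module ℂ X] [TopologicalSpace X]
  [IsTopologicalAddGroup X] [ContinuousSMul ℂ X] (T : X →L[ℂ] X)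

theorem interior_closure_image_sphere_smul_eq_empty (h0 : closure ({0} : Set X) ≠ univ) (y : X) :
    interior (closure ((· • y) '' sphere (0 : ℂ) 1)) = ∅ := by
  set N := (⊥ : Submodule ℂ X).topologicalClosure
  have hN : (N : Set X) = closure {0} := by
    rw [Submodule.topologicalClosure_coe, Submodule.bot_coe]
  have hNint : interior (N : Set X) = ∅ := by
    have := NormedField.nhdsWithin_isUnit_neBot (α := ℂ)
    refine not_nonempty_iff_eq_empty.1 fun hne => h0 ?_
    rw [← hN, N.eq_top_of_nonempty_interior' hne, Submodule.top_coe]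
  by_cases hy : y ∈ N
  · refine subset_empty_iff.1 (hNint ▸ interior_mono (closure_minimal ?_
      (⊥ : Submodule ℂ X).isClosed_topologicalClosure))
    rintro _ ⟨l, -, rfl⟩
    exact N.smul_mem l hy
  refine eq_empty_iff_forall_notMem.2 fun p hp => ?_
  have hK : IsCompact ((· • y) '' sphere (0 : ℂ) 1) :=
    (isCompact_sphere 0 1).image (continuous_id.smul continuous_const)
  obtain ⟨r, hrp, hr⟩ :
      ∃ r : ℝ, (r : ℂ) • p ∈ closure ((· • y) '' sphere (0 : ℂ) 1) ∧ 1 < r := by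
    have hcont : Tendsto (fun r : ℝ => (r : ℂ) • p) (𝓝 1) (𝓝 p) :=
      (Complex.continuous_ofReal.smul continuous_const).tendsto' 1 p (by simp)
    exact (((hcont.eventually (isOpen_interior.mem_nhds hp)).filter_mono nhdsWithin_le_nhds).and
      (self_mem_nhdsWithin : Ioi (1 : ℝ) ∈ 𝓝[>] 1)).exists.imp
        fun r h => ⟨interior_subset h.1, h.2⟩
  -- modulo the subspace `N`, the closure of the circle is the circle itself, so `r • p` and `p`
  -- are circle points with the same direction and `|r| = 1`
  rw [← hK.add_closure_zero_eq_closure, ← hN] at hp hrp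
  obtain ⟨_, ⟨l, hl, rfl⟩, n, hn, rfl⟩ := interior_subset hp
  obtain ⟨_, ⟨l', hl', rfl⟩, n', hn', heq⟩ := hrp
  have hcomb : ((r : ℂ) * l - l') • y = n' - (r : ℂ) • n := by
    linear_combination (norm := module) -heq
  have hrl : (r : ℂ) * l = l' := by
    by_contra hne
    exact hy ((N.smul_mem_iff (sub_ne_zero.2 hne)).1 (hcomb ▸ N.sub_mem hn' (N.smul_mem _ hn)))
  rw [mem_sphere_zero_iff_norm] at hl hl'
  have : |r| = 1 := by
    simpa [hl, hl'] using congrArg norm hrl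
  linarith [le_abs_self r]

theorem subset_closure_circleOrbit_apply (h0 : closure ({0} : Set X) ≠ univ) {V : Set X}
    (hV : IsOpen V) {x : X} (h : V ⊆ closure (circleOrbit T x)) :
    V ⊆ closure (circleOrbit T (T x)) := by
  rw [circleOrbit_eq_union, closure_union, union_comm] at h
  exact (interior_maximal h hV).trans ((interior_union_isClosed_of_interior_empty isClosed_closure
    (interior_closure_image_sphere_smul_eq_empty h0 x)).subset.trans interior_subset)

theorem interior_closure_circleOrbit_subset_closure_circleOrbit_pow_apply
    (h0 : closure ({0} : Set X) ≠ univ) (x : X) (n : ℕ) :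
    interior (closure (circleOrbit T x)) ⊆ closure (circleOrbit T ((T ^ n) x)) := by
  induction n with
  | zero => simpa using interior_subset
  | succ n ih =>
    rw [pow_succ']
    exact subset_closure_circleOrbit_apply T h0 isOpen_interior ih

theorem eventually_smul_interior_closure_circleOrbit_subset (x : X) :
    ∀ᶠ c in 𝓝 (1 : ℂ), c • interior (closure (circleOrbit T x)) ⊆
      interior (closure (circleOrbit T x)) := by
  set U := interior (closure (circleOrbit T x))
  by_cases h0 : closure ({0} : Set X) = univ
  · have hx : x ∈ circleOrbit T x := ⟨1, norm_one, 0, by simp⟩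
    simp [U, closure_eq_univ_of_closure_zero_eq_univ h0 ⟨x, hx⟩]
  rcases U.eq_empty_or_nonempty with hU | hU
  · simp [hU]
  obtain ⟨n, hnU⟩ := exists_pow_apply_mem_interior_closure_circleOrbit T hU
  have hcont : Tendsto (fun c : ℂ => c • (T ^ n) x) (𝓝 1) (𝓝 ((T ^ n) x)) :=
    (continuous_id.smul continuous_const).tendsto' 1 _ (one_smul _ _)
  filter_upwards [hcont.eventually (isOpen_interior.mem_nhds hnU), eventually_ne_nhds one_ne_zero]
    with c hc hc0
  refine interior_maximal ?_ (isOpen_interior.smul₀ hc0)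
  calc c • U ⊆ c • closure (circleOrbit T ((T ^ n) x)) :=
        smul_set_mono (interior_closure_circleOrbit_subset_closure_circleOrbit_pow_apply T h0 x n)
    _ ⊆ closure (circleOrbit T (c • (T ^ n) x)) := by
        rw [circleOrbit_smul]; exact smul_closure_subset c _
    _ ⊆ closure (circleOrbit T x) :=
        closure_minimal (circleOrbit_subset_closure T (interior_subset hc)) isClosed_closure

theorem smul_interior_closure_circleOrbit_subset {c : ℂ} (hc : c ≠ 0) (x : X) :
    c • interior (closure (circleOrbit T x)) ⊆ interior (closure (circleOrbit T x)) :=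
  smul_subset_of_eventually_nhds_one (eventually_smul_interior_closure_circleOrbit_subset T x) hc

end

/-- For every nonzero complex number `μ`, the interior of the closure of
`{λ T^n x : λ ∈ 𝕋, n ≥ 0}` equals the interior of the closure of
`{λ T^n (μ x) : λ ∈ 𝕋, n ≥ 0}`. -/
theorem stmt7 {X : Type*} [AddCommGroup X] [Module ℂ X] [TopologicalSpace X]
    [IsTopologicalAddGroup X] [ContinuousSMul ℂ X] (T : X →L[ℂ] X) (x : X)
    (μ : ℂ) (hμ : μ ≠ 0) :
    interior (closure
        {z : X | ∃ l : ℂ, ‖l‖ = 1 ∧ ∃ n : ℕ, z = l • (T ^ n) x}) =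
      interior (closure
        {z : X | ∃ l : ℂ, ‖l‖ = 1 ∧ ∃ n : ℕ, z = l • (T ^ n) (μ • x)}) := by
  change interior (closure (circleOrbit T x)) = interior (closure (circleOrbit T (μ • x)))
  rw [circleOrbit_smul, closure_smul₀' hμ, interior_smul₀ hμ]
  refine Subset.antisymm ?_ (smul_interior_closure_circleOrbit_subset T hμ x)
  rw [subset_smul_set_iff₀ hμ]
  exact smul_interior_closure_circleOrbit_subset T (inv_ne_zero hμ) x
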